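/- Let G be a finite simple graph and f a uniformly random labeling with fixed label counts. Then the second moment of R_{ii} is E(R_{ii}^2) = |G| * p_2 + (sum_t |G_t|^2 - 2|G|) * p_3 + (|G|^2 - sum_t |G_t|^2 + |G|) * p_4, where p_m = n_i(n_i-1)...(n_i-m+1)/(N(N-1)...(N-m+1)). Consequently Var(R_{ii}) equals this expression minus (|G| n_i(n_i-1)/(N(N-1)))^2. -/

import Mathlib

open Finset

variable {V : Type*} [Fintype V] [DecidableEq V] {K : ℕ}

/-- The set of labelings `f : V → Fin K` with exactly `n k` vertices labeled `k`. -/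
def labelings (n : Fin K → ℕ) : Finset (V → Fin K) :=
  Finset.univ.filter fun f => ∀ k, (Finset.univ.filter fun x => f x = k).card = n k

/-- Probability of an event under the uniform distribution on `labelings n`. -/
noncomputable def prob (n : Fin K → ℕ) (P : (V → Fin K) → Prop) [DecidablePred P] : ℝ :=
  (((labelings n).filter P).card : ℝ) / (((labelings n : Finset (V → Fin K))).card : ℝ)

/-- Expectation of a real random variable under the uniform distribution on `labelings n`. -/
noncomputable def expect (n : Fin K → ℕ) (X : (V → Fin K) → ℝ) : ℝ :=
  (∑ f ∈ labelings n, X f) / (((labelings n : Finset (V → Fin K))).card : ℝ)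

/-- Covariance under the uniform distribution on `labelings n`. -/
noncomputable def covar (n : Fin K → ℕ) (X Y : (V → Fin K) → ℝ) : ℝ :=
  expect n (fun f => (X f - expect n X) * (Y f - expect n Y))

/-- `Rcount G f i j` is the number of edges of `G` whose endpoint labels (under `f`)
are exactly the unordered pair `{i, j}`. -/
def Rcount (G : SimpleGraph V) [DecidableRel G.Adj] (f : V → Fin K) (i j : Fin K) : ℕ :=
  (G.edgeFinset.filter fun e => Sym2.map f e = s(i, j)).card

/-!
`R_ii = ∑_{e ∈ E} 1[f ≡ i on e]`, so `R_ii² = ∑_{(e, e') ∈ E × E} 1[f ≡ i on e ∪ e']`.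
Relabeling by a permutation of `V` shows that the probability of `f ≡ i` on a set `S` depends
only on `|S| = s`, and counting the pairs `(S, f)` with `S ⊆ f⁻¹(i)` identifies it as
`C(n_i, s) / C(N, s) = p_s`. Two edges span `4 - |e ∩ e'|` vertices, and `|e ∩ e'|` is `2` on the
`|G|` diagonal pairs, at most `1` off the diagonal, and sums to `∑_t |G_t|²` over all pairs; so
`∑_t |G_t|² - 2|G|` pairs of edges share a vertex and `|G|² - ∑_t |G_t|² + |G|` are disjoint.
-/

noncomputable def fallingRatio (a N s : ℕ) : ℝ := (a.descFactorial s : ℝ) / N.descFactorial s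

lemma Nat.cast_descFactorial_succ {R : Type*} [Ring R] (a k : ℕ) :
    (a.descFactorial (k + 1) : R) = a.descFactorial k * (a - k) := by
  rw [← descPochhammer_eval_eq_descFactorial, ← descPochhammer_eval_eq_descFactorial,
    descPochhammer_succ_eval]

lemma comp_perm_mem_labelings {n : Fin K → ℕ} {f : V → Fin K} (hf : f ∈ labelings n)
    (σ : Equiv.Perm V) : f ∘ σ ∈ labelings n := by
  simp only [labelings, mem_filter, mem_univ, true_and] at hf ⊢
  intro k
  rw [← hf k]
  exact card_equiv σ (by simp)

lemma labelings_nonempty {n : Fin K → ℕ} (hn : ∑ k, n k = Fintype.card V) :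
    (labelings (V := V) n).Nonempty := by
  obtain ⟨e⟩ : Nonempty ((Σ k, Fin (n k)) ≃ V) := Fintype.card_eq.mp (by simp [hn])
  refine ⟨fun v => (e.symm v).1, mem_filter.mpr ⟨mem_univ _, fun k => ?_⟩⟩
  calc #{v | (e.symm v).1 = k} = #{p : Σ k, Fin (n k) | p.1 = k} := card_equiv e.symm (by simp)
    _ = n k := by
      rw [← univ_sigma_univ, filter_sigma]
      simp [apply_ite card]

def labelingsConstOn (n : Fin K → ℕ) (i : Fin K) (S : Finset V) : Finset (V → Fin K) :=
  {f ∈ labelings n | ∀ v ∈ S, f v = i}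

lemma card_labelingsConstOn_congr (n : Fin K → ℕ) (i : Fin K) {S T : Finset V}
    (h : #S = #T) : #(labelingsConstOn n i S) = #(labelingsConstOn n i T) := by
  obtain ⟨σ, rfl⟩ := Equiv.Perm.exists_map_finset_eq S T h
  refine card_equiv (σ.arrowCongr (Equiv.refl _)) fun f => ?_
  simp only [labelingsConstOn, mem_filter, mem_map_equiv, Equiv.arrowCongr_apply]
  refine and_congr ⟨fun hf => comp_perm_mem_labelings hf _, fun hf => ?_⟩
    ⟨fun hf v hv => hf _ hv, fun hf v hv => by simpa using hf (σ v) (by simpa)⟩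
  simpa [Function.comp_def] using comp_perm_mem_labelings hf σ

lemma sum_card_labelingsConstOn_powersetCard (n : Fin K → ℕ) (i : Fin K) (s : ℕ) :
    ∑ S ∈ powersetCard s (univ : Finset V), #(labelingsConstOn n i S)
      = (n i).choose s * #(labelings (V := V) n) := by
  simp only [labelingsConstOn, card_filter]
  rw [sum_comm, mul_comm, ← smul_eq_mul, ← sum_const]
  refine sum_congr rfl fun f hf => ?_
  rw [← card_filter, ← (mem_filter.mp hf).2 i, ← card_powersetCard]
  congr 1; ext S
  simp [subset_iff, and_comm]

lemma choose_mul_card_labelingsConstOn (n : Fin K → ℕ) (i : Fin K) (S : Finset V) :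
    (Fintype.card V).choose #S * #(labelingsConstOn n i S)
      = (n i).choose #S * #(labelings (V := V) n) := by
  rw [← sum_card_labelingsConstOn_powersetCard, ← card_univ, ← card_powersetCard, ← smul_eq_mul,
    ← sum_const]
  exact sum_congr rfl fun T hT => card_labelingsConstOn_congr n i (mem_powersetCard.mp hT).2.symm

lemma prob_forall_mem_eq (n : Fin K → ℕ) (i : Fin K) {S : Finset V} {s : ℕ}
    (hL : (labelings (V := V) n).Nonempty) (hS : #S = s) (hs : s ≤ Fintype.card V) :
    prob n (fun f => ∀ v ∈ S, f v = i) = fallingRatio (n i) (Fintype.card V) s := by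
  subst hS
  have hL' : (#(labelings (V := V) n) : ℝ) ≠ 0 := by exact_mod_cast hL.card_pos.ne'
  have hN : ((Fintype.card V).choose #S : ℝ) ≠ 0 := by exact_mod_cast (Nat.choose_pos hs).ne'
  rw [fallingRatio, Nat.descFactorial_eq_factorial_mul_choose,
    Nat.descFactorial_eq_factorial_mul_choose, Nat.cast_mul, Nat.cast_mul,
    mul_div_mul_left _ _ (by positivity), prob, div_eq_div_iff hL' hN, mul_comm]
  exact_mod_cast choose_mul_card_labelingsConstOn n i S

lemma expect_indicator (n : Fin K → ℕ) (P : (V → Fin K) → Prop) [DecidablePred P] :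
    expect n (fun f => if P f then 1 else 0) = prob n P := by
  rw [_root_.expect, prob, sum_boole]

lemma expect_sum {ι : Type*} (n : Fin K → ℕ) (s : Finset ι) (X : ι → (V → Fin K) → ℝ) :
    expect n (fun f => ∑ j ∈ s, X j f) = ∑ j ∈ s, expect n (X j) := by
  simp only [_root_.expect]
  rw [sum_comm, sum_div]

lemma covar_self {n : Fin K → ℕ} (hL : (labelings (V := V) n).Nonempty) (X : (V → Fin K) → ℝ) :
    covar n X X = expect n (fun f => X f ^ 2) - expect n X ^ 2 := by
  have hL' : (#(labelings (V := V) n) : ℝ) ≠ 0 := by exact_mod_cast hL.card_pos.ne'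
  unfold covar
  set c := expect n X with hc
  have hX : ∑ f ∈ labelings n, X f = c * #(labelings (V := V) n) := by
    rw [hc, _root_.expect, div_mul_cancel₀ _ hL']
  simp only [_root_.expect, sub_mul, mul_sub, sum_sub_distrib, ← sum_mul, ← mul_sum, hX,
    sum_const, nsmul_eq_mul]
  field_simp
  ring

lemma Sym2.map_eq_mk_self_iff {α β : Type*} (f : α → β) (z : Sym2 α) (b : β) :
    z.map f = s(b, b) ↔ ∀ a ∈ z, f a = b := by
  induction z with | _ x y => simp

lemma Sym2.card_toFinset_inter_le_one {α : Type*} [DecidableEq α] {z z' : Sym2 α} (h : z ≠ z') :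
    #(z.toFinset ∩ z'.toFinset) ≤ 1 := by
  refine card_le_one.mpr fun x hx y hy => ?_
  simp only [mem_inter, Sym2.mem_toFinset] at hx hy
  by_contra hxy
  exact h (Sym2.eq_of_ne_mem hxy hx.1 hy.1 hx.2 hy.2)

namespace SimpleGraph

variable (G : SimpleGraph V) [DecidableRel G.Adj]

lemma card_toFinset_of_mem_edgeFinset {e : Sym2 V} (he : e ∈ G.edgeFinset) : #e.toFinset = 2 :=
  Sym2.card_toFinset_of_not_isDiag _ (G.not_isDiag_of_mem_edgeSet (mem_edgeFinset.mp he))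

lemma sum_card_toFinset_inter :
    ∑ p ∈ G.edgeFinset ×ˢ G.edgeFinset, #(p.1.toFinset ∩ p.2.toFinset) = ∑ t, G.degree t ^ 2 := by
  calc ∑ p ∈ G.edgeFinset ×ˢ G.edgeFinset, #(p.1.toFinset ∩ p.2.toFinset)
      = ∑ t, #{p ∈ G.edgeFinset ×ˢ G.edgeFinset | t ∈ p.1 ∧ t ∈ p.2} := by
        simp only [card_eq_sum_ones, sum_filter]
        rw [sum_comm]
        refine sum_congr rfl fun p _ => ?_
        rw [← sum_filter]
        congr 1; ext t; simp
    _ = ∑ t, G.degree t ^ 2 := by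
        refine sum_congr rfl fun t _ => ?_
        rw [filter_product (fun e => t ∈ e) (fun e => t ∈ e), card_product,
          ← incidenceFinset_eq_filter, card_incidenceFinset_eq_degree, sq]

lemma sum_diag_comp_card_inter (g : ℕ → ℝ) :
    ∑ p ∈ G.edgeFinset.diag, g #(p.1.toFinset ∩ p.2.toFinset) = #G.edgeFinset * g 2 := by
  rw [diag, sum_map, ← nsmul_eq_mul, ← sum_const]
  refine sum_congr rfl fun e he => ?_
  simp [G.card_toFinset_of_mem_edgeFinset he]

lemma sum_offDiag_card_inter :
    ∑ p ∈ G.edgeFinset.offDiag, (#(p.1.toFinset ∩ p.2.toFinset) : ℝ)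
      = ∑ t, (G.degree t : ℝ) ^ 2 - 2 * #G.edgeFinset := by
  have h := sum_union (disjoint_diag_offDiag G.edgeFinset)
    (f := fun p => (#(p.1.toFinset ∩ p.2.toFinset) : ℝ))
  rw [diag_union_offDiag, G.sum_diag_comp_card_inter (fun k => (k : ℝ))] at h
  rw [← Nat.cast_sum, sum_card_toFinset_inter] at h
  push_cast at h
  linarith

lemma sum_edge_pairs_comp_card_inter (q : ℕ → ℝ) :
    ∑ p ∈ G.edgeFinset ×ˢ G.edgeFinset, q #(p.1.toFinset ∩ p.2.toFinset)
      = #G.edgeFinset * q 2 + (∑ t, (G.degree t : ℝ) ^ 2 - 2 * #G.edgeFinset) * q 1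
        + (#G.edgeFinset ^ 2 - ∑ t, (G.degree t : ℝ) ^ 2 + #G.edgeFinset) * q 0 := by
  have hoff : ∀ p ∈ G.edgeFinset.offDiag, q #(p.1.toFinset ∩ p.2.toFinset)
      = q 0 + (q 1 - q 0) * #(p.1.toFinset ∩ p.2.toFinset) := by
    intro p hp
    have := Sym2.card_toFinset_inter_le_one (mem_offDiag.mp hp).2.2
    interval_cases #(p.1.toFinset ∩ p.2.toFinset) <;> simp
  rw [← diag_union_offDiag, sum_union (disjoint_diag_offDiag _), sum_diag_comp_card_inter,
    sum_congr rfl hoff, sum_add_distrib, ← mul_sum, sum_offDiag_card_inter, sum_const,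
    offDiag_card, nsmul_eq_mul, Nat.cast_sub (Nat.le_mul_self _)]
  push_cast
  ring

lemma Rcount_self_eq_sum (f : V → Fin K) (i : Fin K) :
    (Rcount G f i i : ℝ) = ∑ e ∈ G.edgeFinset, if ∀ v ∈ e.toFinset, f v = i then 1 else 0 := by
  simp only [Rcount, Sym2.map_eq_mk_self_iff, Sym2.mem_toFinset, sum_boole]

lemma Rcount_self_sq_eq_sum (f : V → Fin K) (i : Fin K) :
    (Rcount G f i i : ℝ) ^ 2 = ∑ p ∈ G.edgeFinset ×ˢ G.edgeFinset,
      if ∀ v ∈ p.1.toFinset ∪ p.2.toFinset, f v = i then 1 else 0 := by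
  simp only [sq, Rcount_self_eq_sum, sum_mul_sum, sum_product, ite_zero_mul_ite_zero, one_mul,
    forall_mem_union]

lemma expect_Rcount_self {n : Fin K → ℕ} (hL : (labelings (V := V) n).Nonempty)
    (hV : 2 ≤ Fintype.card V) (i : Fin K) :
    expect n (fun f => (Rcount G f i i : ℝ))
      = #G.edgeFinset * fallingRatio (n i) (Fintype.card V) 2 := by
  simp only [Rcount_self_eq_sum, expect_sum, expect_indicator]
  rw [sum_congr rfl fun e he => prob_forall_mem_eq n i hL
    (G.card_toFinset_of_mem_edgeFinset he) hV, sum_const, nsmul_eq_mul]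

lemma expect_Rcount_self_sq {n : Fin K → ℕ} (hL : (labelings (V := V) n).Nonempty)
    (hV : 4 ≤ Fintype.card V) (i : Fin K) :
    expect n (fun f => (Rcount G f i i : ℝ) ^ 2)
      = #G.edgeFinset * fallingRatio (n i) (Fintype.card V) 2
        + (∑ t, (G.degree t : ℝ) ^ 2 - 2 * #G.edgeFinset) * fallingRatio (n i) (Fintype.card V) 3
        + (#G.edgeFinset ^ 2 - ∑ t, (G.degree t : ℝ) ^ 2 + #G.edgeFinset)
          * fallingRatio (n i) (Fintype.card V) 4 := by
  have hunion : ∀ p ∈ G.edgeFinset ×ˢ G.edgeFinset,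
      #(p.1.toFinset ∪ p.2.toFinset) = 4 - #(p.1.toFinset ∩ p.2.toFinset) := by
    intro p hp
    obtain ⟨h1, h2⟩ := mem_product.mp hp
    have := card_union_add_card_inter p.1.toFinset p.2.toFinset
    rw [G.card_toFinset_of_mem_edgeFinset h1, G.card_toFinset_of_mem_edgeFinset h2] at this
    omega
  simp only [Rcount_self_sq_eq_sum, expect_sum, expect_indicator]
  rw [sum_congr rfl fun p hp => prob_forall_mem_eq n i hL (hunion p hp)
    (by omega), G.sum_edge_pairs_comp_card_inter (fun k => fallingRatio (n i) _ (4 - k))]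

end SimpleGraph

theorem stmt_8 (G : SimpleGraph V) [DecidableRel G.Adj]
    (n : Fin K → ℕ) (N : ℕ) (hN : N = Fintype.card V) (hN4 : 4 ≤ N)
    (hsum : ∑ k, n k = N) (i : Fin K)
    (m D p2 p3 p4 : ℝ)
    (hm : m = (G.edgeFinset.card : ℝ))
    (hD : D = ∑ t : V, (G.degree t : ℝ) ^ 2)
    (hp2 : p2 = (n i : ℝ) * ((n i : ℝ) - 1) / ((N : ℝ) * ((N : ℝ) - 1)))
    (hp3 : p3 = (n i : ℝ) * ((n i : ℝ) - 1) * ((n i : ℝ) - 2)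
        / ((N : ℝ) * ((N : ℝ) - 1) * ((N : ℝ) - 2)))
    (hp4 : p4 = (n i : ℝ) * ((n i : ℝ) - 1) * ((n i : ℝ) - 2) * ((n i : ℝ) - 3)
        / ((N : ℝ) * ((N : ℝ) - 1) * ((N : ℝ) - 2) * ((N : ℝ) - 3))) :
    expect n (fun f : V → Fin K => ((Rcount G f i i : ℝ)) ^ 2)
        = m * p2 + (D - 2 * m) * p3 + (m ^ 2 - D + m) * p4
    ∧ covar n (fun f : V → Fin K => (Rcount G f i i : ℝ))
        (fun f : V → Fin K => (Rcount G f i i : ℝ))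
        = m * p2 + (D - 2 * m) * p3 + (m ^ 2 - D + m) * p4 - (m * p2) ^ 2 := by
  subst hN
  have hL := labelings_nonempty hsum
  have hq2 : fallingRatio (n i) (Fintype.card V) 2 = p2 := by
    simp only [hp2, fallingRatio, Nat.cast_descFactorial_two]
  have hq3 : fallingRatio (n i) (Fintype.card V) 3 = p3 := by
    simp only [hp3, fallingRatio, Nat.cast_descFactorial_succ]
    norm_num
  have hq4 : fallingRatio (n i) (Fintype.card V) 4 = p4 := by
    simp only [hp4, fallingRatio, Nat.cast_descFactorial_succ]
    norm_num
  have hsq : expect n (fun f => (Rcount G f i i : ℝ) ^ 2)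
      = m * p2 + (D - 2 * m) * p3 + (m ^ 2 - D + m) * p4 := by
    rw [G.expect_Rcount_self_sq hL hN4, hm, hD, hq2, hq3, hq4]
  refine ⟨hsq, ?_⟩
  rw [covar_self hL, hsq, G.expect_Rcount_self hL (by omega), hm, hq2]
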